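/- Let E be a pseudo effect algebra satisfying σ-(RDP). If m is a σ-additive Jordan signed measure on E, then m⁺, m⁻, and |m| are σ-additive. -/

import Mathlib

/-!
The positive part is `m⁺(a) = sup {m(x) : x ≤ a}`. The Riesz decomposition property, a special
case of σ-(RDP), makes this a measure, so it is the supremum of `m` and `0` in `J(E)`, and
`m⁻ = m⁺ - m`. For σ-additivity of `m⁺` along a chain `aₙ ↑ a`, σ-(RDP) applied to
`x + y = a = Σₙ (aₙ₊₁ - aₙ)` writes any `x ≤ a` as the supremum of a chain `xₙ ≤ aₙ`, so
`m(x) = lim m(xₙ) ≤ lim m⁺(aₙ)`.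
-/

/-- A pseudo effect algebra: a partial algebra `(E; +, 0, 1)` where the partial
addition is encoded as `padd : E → E → Option E` (`padd a b = some c` means
`a + b` is defined and equals `c`). -/
class PseudoEffectAlgebra (E : Type) where
  padd : E → E → Option E
  pzero : E
  pone : E
  /-- (i) `a+b` and `(a+b)+c` exist iff `b+c` and `a+(b+c)` exist ... -/
  assoc_defined : ∀ a b c : E,
    (∃ x, padd a b = some x ∧ (padd x c).isSome) ↔
      (∃ y, padd b c = some y ∧ (padd a y).isSome)
  /-- ... and in this case `(a+b)+c = a+(b+c)`. -/
  assoc_eq : ∀ a b c x y : E, padd a b = some x → padd b c = some y →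
    padd x c = padd a y
  /-- (ii) there is exactly one `d` with `a + d = 1`. -/
  exists_unique_right : ∀ a : E, ∃! d, padd a d = some pone
  /-- (ii) there is exactly one `e` with `e + a = 1`. -/
  exists_unique_left : ∀ a : E, ∃! e, padd e a = some pone
  /-- (iii) if `a+b` exists, there are `d, e` with `a+b = d+a = b+e`. -/
  shift : ∀ a b c : E, padd a b = some c →
    ∃ d e, padd d a = some c ∧ padd b e = some c
  /-- (iv) if `1+a` exists then `a = 0`. -/
  one_add : ∀ a : E, (padd pone a).isSome → a = pzero
  /-- (iv) if `a+1` exists then `a = 0`. -/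
  add_one : ∀ a : E, (padd a pone).isSome → a = pzero

namespace PseudoEffectAlgebra

variable {E : Type} [PseudoEffectAlgebra E]

/-- The induced partial order: `a ≤ b` iff `b = a + c` for some `c ∈ E`. -/
def pLe (a b : E) : Prop := ∃ c, padd a c = some b

/-- The Riesz Decomposition Property (RDP). -/
def RDP (E : Type) [PseudoEffectAlgebra E] : Prop :=
  ∀ a₁ a₂ b₁ b₂ c : E, padd a₁ a₂ = some c → padd b₁ b₂ = some c →
    ∃ d₁ d₂ d₃ d₄ : E, padd d₁ d₂ = some a₁ ∧ padd d₃ d₄ = some a₂ ∧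
      padd d₁ d₃ = some b₁ ∧ padd d₂ d₄ = some b₂

/-- A signed measure on `E`. -/
def IsSignedMeasure (m : E → ℝ) : Prop :=
  ∀ a b c : E, padd a b = some c → m c = m a + m b

/-- A (positive) measure on `E`. -/
def IsMeasure (m : E → ℝ) : Prop :=
  IsSignedMeasure m ∧ ∀ a : E, 0 ≤ m a

/-- A state on `E`. -/
def IsState (s : E → ℝ) : Prop := IsMeasure s ∧ s pone = 1

/-- A Jordan signed measure: a difference of two measures. -/
def IsJordan (m : E → ℝ) : Prop :=
  ∃ m₁ m₂ : E → ℝ, IsMeasure m₁ ∧ IsMeasure m₂ ∧ m = m₁ - m₂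

/-- `m ≤⁺ m'` iff `m' - m` is a (positive) measure. -/
def MLe (m m' : E → ℝ) : Prop := IsMeasure (m' - m)

/-- The (partial) sum `x₁ + ⋯ + xₙ` of a nonempty list of elements of `E`. -/
def lsum : List E → Option E
  | [] => some pzero
  | [a] => some a
  | a :: b :: l => (lsum (b :: l)).bind (fun s => padd a s)

/-- `m` is the supremum, in the po-group `J(E)` of Jordan signed measures ordered
by `≤⁺`, of the set `S`. -/
def IsSupIn (S : Set (E → ℝ)) (m : E → ℝ) : Prop :=
  IsJordan m ∧ (∀ t ∈ S, MLe t m) ∧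
    ∀ h : E → ℝ, IsJordan h → (∀ t ∈ S, MLe t h) → MLe m h

/-- `m` is the infimum, in the po-group `J(E)` of Jordan signed measures ordered
by `≤⁺`, of the set `S`. -/
def IsInfIn (S : Set (E → ℝ)) (m : E → ℝ) : Prop :=
  IsJordan m ∧ (∀ t ∈ S, MLe m t) ∧
    ∀ h : E → ℝ, IsJordan h → (∀ t ∈ S, MLe h t) → MLe h m

/-- `b` is the least upper bound (in the order of `E`) of the set `S ⊆ E`. -/
def IsLubE (S : Set E) (b : E) : Prop :=
  (∀ a ∈ S, pLe a b) ∧ ∀ c : E, (∀ a ∈ S, pLe a c) → pLe b c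

/-- A σ-additive signed measure: if `a₁ ≤ a₂ ≤ ⋯` and `a = ⋁ₙ aₙ` exists in `E`,
then `m(a) = limₙ m(aₙ)`. -/
def SigmaAdditive (m : E → ℝ) : Prop :=
  ∀ (a : ℕ → E) (b : E), (∀ n, pLe (a n) (a (n + 1))) → IsLubE (Set.range a) b →
    Filter.Tendsto (fun n => m (a n)) Filter.atTop (nhds (m b))

/-- `s = Σₙ aₙ`: all partial sums `bₙ = a₀ + ⋯ + aₙ` exist and `s = ⋁ₙ bₙ`. -/
def HasSumE (a : ℕ → E) (s : E) : Prop :=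
  ∃ b : ℕ → E, b 0 = a 0 ∧ (∀ n, padd (b n) (a (n + 1)) = some (b (n + 1))) ∧
    IsLubE (Set.range b) s

/-- `E` satisfies σ-(RDP): if `a₁ + a₂ = Σₙ bₙ`, then there are sequences
`(c₁ₙ)`, `(c₂ₙ)` with `aᵢ = Σₙ cᵢₙ` and `bₙ = c₁ₙ + c₂ₙ` for all `n`. -/
def SigmaRDP (E : Type) [PseudoEffectAlgebra E] : Prop :=
  ∀ (a₁ a₂ x : E) (b : ℕ → E), padd a₁ a₂ = some x → HasSumE b x →
    ∃ c₁ c₂ : ℕ → E, HasSumE c₁ a₁ ∧ HasSumE c₂ a₂ ∧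
      ∀ n, padd (c₁ n) (c₂ n) = some (b n)

lemma padd_padd_right {a b c x w : E} (h₁ : padd a b = some x) (h₂ : padd x c = some w) :
    ∃ y, padd b c = some y ∧ padd a y = some w := by
  obtain ⟨y, hy, -⟩ := (assoc_defined a b c).1 ⟨x, h₁, by rw [h₂]; rfl⟩
  exact ⟨y, hy, by rw [← assoc_eq a b c x y h₁ hy, h₂]⟩

lemma padd_padd_left {a b c y w : E} (h₁ : padd b c = some y) (h₂ : padd a y = some w) :
    ∃ x, padd a b = some x ∧ padd x c = some w := by
  obtain ⟨x, hx, -⟩ := (assoc_defined a b c).2 ⟨y, h₁, by rw [h₂]; rfl⟩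
  exact ⟨x, hx, by rw [assoc_eq a b c x y hx h₁, h₂]⟩

lemma one_padd_zero : padd (pone : E) pzero = some pone := by
  obtain ⟨d, hd, -⟩ := exists_unique_right (pone : E)
  rwa [one_add d (by rw [hd]; rfl)] at hd

lemma zero_padd_one : padd (pzero : E) pone = some pone := by
  obtain ⟨e, he, -⟩ := exists_unique_left (pone : E)
  rwa [add_one e (by rw [he]; rfl)] at he

lemma padd_zero (a : E) : padd a pzero = some a := by
  obtain ⟨e, he, -⟩ := exists_unique_left a
  obtain ⟨y, hy, hey⟩ := padd_padd_right he one_padd_zero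
  obtain ⟨d, -, hu⟩ := exists_unique_right e
  rwa [(hu y hey).trans (hu a he).symm] at hy

lemma zero_padd (a : E) : padd pzero a = some a := by
  obtain ⟨d, hd, -⟩ := exists_unique_right a
  obtain ⟨x, hx, hxd⟩ := padd_padd_left hd zero_padd_one
  obtain ⟨e, -, hu⟩ := exists_unique_left d
  rwa [(hu x hxd).trans (hu a hd).symm] at hx

lemma padd_left_cancel {a b c v : E} (h₁ : padd a b = some v) (h₂ : padd a c = some v) :
    b = c := by
  obtain ⟨e, he, -⟩ := exists_unique_left v
  obtain ⟨x, hx, hxb⟩ := padd_padd_left h₁ he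
  obtain ⟨x', hx', hxc⟩ := padd_padd_left h₂ he
  obtain rfl : x' = x := Option.some.inj (hx'.symm.trans hx)
  obtain ⟨d, -, hu⟩ := exists_unique_right x'
  rw [hu b hxb, hu c hxc]

lemma eq_zero_of_padd_eq_zero {a b : E} (h : padd a b = some pzero) :
    a = pzero ∧ b = pzero := by
  obtain ⟨y, hy, -⟩ := (assoc_defined a b pone).1 ⟨pzero, h, by rw [zero_padd_one]; rfl⟩
  obtain rfl : b = pzero := add_one b (by rw [hy]; rfl)
  exact ⟨Option.some.inj ((padd_zero a).symm.trans h), rfl⟩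

lemma pLe_refl (a : E) : pLe a a := ⟨pzero, padd_zero a⟩

lemma zero_pLe (a : E) : pLe pzero a := ⟨a, zero_padd a⟩

lemma pLe_trans {a b c : E} (h₁ : pLe a b) (h₂ : pLe b c) : pLe a c := by
  obtain ⟨u, hu⟩ := h₁
  obtain ⟨v, hv⟩ := h₂
  obtain ⟨y, -, hy⟩ := padd_padd_right hu hv
  exact ⟨y, hy⟩

lemma pLe_antisymm {a b : E} (h₁ : pLe a b) (h₂ : pLe b a) : a = b := by
  obtain ⟨c, hc⟩ := h₁
  obtain ⟨d, hd⟩ := h₂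
  obtain ⟨y, hy, hay⟩ := padd_padd_right hc hd
  obtain rfl : y = pzero := padd_left_cancel hay (padd_zero a)
  obtain rfl : c = pzero := (eq_zero_of_padd_eq_zero hy).1
  exact Option.some.inj ((padd_zero a).symm.trans hc)

lemma exists_padd_pLe_of_pLe {x a y b c : E} (hx : pLe x a) (hy : pLe y b)
    (hc : padd a b = some c) : ∃ z, padd x y = some z ∧ pLe z c := by
  obtain ⟨u, hu⟩ := hx
  obtain ⟨w, hw, hxw⟩ := padd_padd_right hu hc
  -- commute `u` past `b`: `u + b = b + e`
  obtain ⟨-, e, -, he⟩ := shift u b w hw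
  obtain ⟨t, ht⟩ := hy
  obtain ⟨s, -, hs⟩ := padd_padd_right ht he
  obtain ⟨z, hz, hzs⟩ := padd_padd_left hs hxw
  exact ⟨z, hz, s, hzs⟩

lemma isLubE_of_mem {S : Set E} {a : E} (ha : a ∈ S) (hub : ∀ x ∈ S, pLe x a) :
    IsLubE S a :=
  ⟨hub, fun _ hc => hc a ha⟩

lemma IsLubE.unique {S : Set E} {a b : E} (ha : IsLubE S a) (hb : IsLubE S b) : a = b :=
  pLe_antisymm (ha.2 b hb.1) (hb.2 a ha.1)

lemma HasSumE.padd_eq {c : ℕ → E} {s : E} (h : HasSumE c s) (hc : ∀ n, c (n + 2) = pzero) :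
    padd (c 0) (c 1) = some s := by
  obtain ⟨p, hp₀, hp, hs⟩ := h
  have hconst : ∀ n, p (n + 1) = p 1 := by
    intro n
    induction n with
    | zero => rfl
    | succ n ih =>
      have := hp (n + 1)
      rw [hc n, padd_zero] at this
      rw [← Option.some.inj this, ih]
  have hp₁ : IsLubE (Set.range p) (p 1) := by
    refine isLubE_of_mem ⟨1, rfl⟩ ?_
    rintro _ ⟨_ | n, rfl⟩
    · exact ⟨c 1, hp₀ ▸ hp 0⟩
    · exact hconst n ▸ pLe_refl _
  rw [← hp₀, hs.unique hp₁]
  exact hp 0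

def pairSeq (a b : E) : ℕ → E
  | 0 => a
  | 1 => b
  | _ + 2 => pzero

lemma hasSumE_pairSeq {a b c : E} (h : padd a b = some c) : HasSumE (pairSeq a b) c := by
  refine ⟨fun | 0 => a | _ + 1 => c, rfl, ?_, isLubE_of_mem ⟨1, rfl⟩ ?_⟩
  · rintro (_ | n)
    exacts [h, padd_zero c]
  · rintro _ ⟨_ | n, rfl⟩
    exacts [⟨b, h⟩, pLe_refl c]

lemma SigmaRDP.rdp (h : SigmaRDP E) : RDP E := by
  intro a₁ a₂ b₁ b₂ c ha hb
  obtain ⟨c₁, c₂, h₁, h₂, hc⟩ := h a₁ a₂ c (pairSeq b₁ b₂) ha (hasSumE_pairSeq hb)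
  have hzero n := eq_zero_of_padd_eq_zero (hc (n + 2))
  exact ⟨c₁ 0, c₁ 1, c₂ 0, c₂ 1, h₁.padd_eq fun n => (hzero n).1,
    h₂.padd_eq fun n => (hzero n).2, hc 0, hc 1⟩

lemma SigmaRDP.exists_chain_le {a : ℕ → E} {b x : E} (h : SigmaRDP E)
    (ha : ∀ n, pLe (a n) (a (n + 1))) (hb : IsLubE (Set.range a) b) (hx : pLe x b) :
    ∃ p : ℕ → E, (∀ n, pLe (p n) (p (n + 1))) ∧ IsLubE (Set.range p) x ∧
      ∀ n, pLe (p n) (a n) := by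
  choose u hu using ha
  obtain ⟨y, hxy⟩ := hx
  obtain ⟨c₁, c₂, ⟨p, hp₀, hp, hpx⟩, -, hc⟩ :=
    h x y b (fun | 0 => a 0 | n + 1 => u n) hxy ⟨a, rfl, hu, hb⟩
  refine ⟨p, fun n => ⟨c₁ (n + 1), hp n⟩, hpx, fun n => ?_⟩
  induction n with
  | zero => exact hp₀ ▸ ⟨c₂ 0, hc 0⟩
  | succ n ih =>
    obtain ⟨z, hz, hzle⟩ := exists_padd_pLe_of_pLe ih ⟨c₂ (n + 1), hc (n + 1)⟩ (hu n)
    rwa [Option.some.inj (hz.symm.trans (hp n))] at hzle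

lemma IsSignedMeasure.map_zero {m : E → ℝ} (hm : IsSignedMeasure m) : m pzero = 0 := by
  linarith [hm pzero pzero pzero (padd_zero pzero)]

lemma IsSignedMeasure.sub {f g : E → ℝ} (hf : IsSignedMeasure f) (hg : IsSignedMeasure g) :
    IsSignedMeasure (f - g) := by
  intro a b c h
  simp only [Pi.sub_apply, hf a b c h, hg a b c h]
  ring

lemma IsMeasure.add {f g : E → ℝ} (hf : IsMeasure f) (hg : IsMeasure g) :
    IsMeasure (f + g) := by
  refine ⟨fun a b c h => ?_, fun a => add_nonneg (hf.2 a) (hg.2 a)⟩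
  simp only [Pi.add_apply, hf.1 a b c h, hg.1 a b c h]
  ring

lemma IsMeasure.mono {m : E → ℝ} (hm : IsMeasure m) {a b : E} (h : pLe a b) : m a ≤ m b := by
  obtain ⟨c, hc⟩ := h
  linarith [hm.1 a c b hc, hm.2 c]

lemma isMeasure_zero : IsMeasure (0 : E → ℝ) :=
  ⟨fun _ _ _ _ => by simp, fun _ => le_rfl⟩

lemma IsMeasure.isJordan {m : E → ℝ} (hm : IsMeasure m) : IsJordan m :=
  ⟨m, 0, hm, isMeasure_zero, (sub_zero m).symm⟩

lemma IsJordan.isSignedMeasure {m : E → ℝ} (hm : IsJordan m) : IsSignedMeasure m := by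
  obtain ⟨m₁, m₂, h₁, h₂, rfl⟩ := hm
  exact h₁.1.sub h₂.1

lemma IsJordan.sub {f g : E → ℝ} (hf : IsJordan f) (hg : IsJordan g) : IsJordan (f - g) := by
  obtain ⟨f₁, f₂, hf₁, hf₂, rfl⟩ := hf
  obtain ⟨g₁, g₂, hg₁, hg₂, rfl⟩ := hg
  exact ⟨f₁ + g₂, f₂ + g₁, hf₁.add hg₂, hf₂.add hg₁, by abel⟩

lemma MLe.le {f g : E → ℝ} (h : MLe f g) (a : E) : f a ≤ g a :=
  sub_nonneg.1 (h.2 a)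

lemma mLe_of_le {f g : E → ℝ} (hf : IsSignedMeasure f) (hg : IsSignedMeasure g)
    (h : ∀ a, f a ≤ g a) : MLe f g :=
  ⟨hg.sub hf, fun a => sub_nonneg.2 (h a)⟩

lemma eq_sub_of_isSupIn_of_isInfIn {m mp mi : E → ℝ} (hm : IsJordan m)
    (hp : IsSupIn {m, 0} mp) (hi : IsInfIn {m, 0} mi) : mi = m - mp := by
  obtain ⟨hpJ, hpub, hpleast⟩ := hp
  obtain ⟨hiJ, hilb, higreatest⟩ := hi
  have hsm := hm.isSignedMeasure
  have hs0 := (isMeasure_zero (E := E)).1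
  have hm_mp := (hpub m (Set.mem_insert _ _)).le
  have h0_mp : ∀ a, 0 ≤ mp a := (hpub 0 (Set.mem_insert_of_mem _ rfl)).le
  have hmi_m := (hilb m (Set.mem_insert _ _)).le
  have hmi_0 : ∀ a, mi a ≤ 0 := (hilb 0 (Set.mem_insert_of_mem _ rfl)).le
  have hle := (higreatest _ (hm.sub hpJ) <| by
    rintro t (rfl | rfl)
    · exact mLe_of_le (hsm.sub hpJ.isSignedMeasure) hsm fun a => by
        simp only [Pi.sub_apply]; linarith [h0_mp a]
    · exact mLe_of_le (hsm.sub hpJ.isSignedMeasure) hs0 fun a => by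
        simp only [Pi.sub_apply, Pi.zero_apply]; linarith [hm_mp a]).le
  have hge := (hpleast _ (hm.sub hiJ) <| by
    rintro t (rfl | rfl)
    · exact mLe_of_le hsm (hsm.sub hiJ.isSignedMeasure) fun a => by
        simp only [Pi.sub_apply]; linarith [hmi_0 a]
    · exact mLe_of_le hs0 (hsm.sub hiJ.isSignedMeasure) fun a => by
        simp only [Pi.sub_apply, Pi.zero_apply]; linarith [hmi_m a]).le
  funext a
  simp only [Pi.sub_apply] at hle hge ⊢
  linarith [hle a, hge a]

noncomputable def supBelow (m : E → ℝ) (a : E) : ℝ := sSup (m '' {x | pLe x a})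

section supBelow

variable {m : E → ℝ}

lemma bddAbove_image_pLe (hm : IsJordan m) (a : E) : BddAbove (m '' {x | pLe x a}) := by
  obtain ⟨m₁, m₂, h₁, h₂, rfl⟩ := hm
  refine ⟨m₁ a, ?_⟩
  rintro _ ⟨x, hx, rfl⟩
  simp only [Pi.sub_apply]
  linarith [h₁.mono hx, h₂.2 x]

lemma le_supBelow (hm : IsJordan m) {x a : E} (h : pLe x a) : m x ≤ supBelow m a :=
  le_csSup (bddAbove_image_pLe hm a) ⟨x, h, rfl⟩

lemma supBelow_le {a : E} {r : ℝ} (h : ∀ x, pLe x a → m x ≤ r) : supBelow m a ≤ r :=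
  csSup_le ⟨m a, a, pLe_refl a, rfl⟩ fun _ ⟨x, hx, hr⟩ => hr ▸ h x hx

lemma supBelow_mono (hm : IsJordan m) {a b : E} (h : pLe a b) : supBelow m a ≤ supBelow m b :=
  supBelow_le fun _ hx => le_supBelow hm (pLe_trans hx h)

lemma self_le_supBelow (hm : IsJordan m) (a : E) : m a ≤ supBelow m a :=
  le_supBelow hm (pLe_refl a)

lemma supBelow_nonneg (hm : IsJordan m) (a : E) : 0 ≤ supBelow m a :=
  hm.isSignedMeasure.map_zero ▸ le_supBelow hm (zero_pLe a)

lemma isSignedMeasure_supBelow (hrdp : RDP E) (hm : IsJordan m) :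
    IsSignedMeasure (supBelow m) := by
  have hsm := hm.isSignedMeasure
  intro a b c hc
  apply le_antisymm
  · refine supBelow_le fun z ⟨t, ht⟩ => ?_
    obtain ⟨d₁, d₂, d₃, d₄, e₁, -, e₃, e₄⟩ := hrdp z t a b c ht hc
    linarith [hsm d₁ d₂ z e₁, le_supBelow hm ⟨d₃, e₃⟩, le_supBelow hm ⟨d₄, e₄⟩]
  · suffices supBelow m a ≤ supBelow m c - supBelow m b by linarith
    refine supBelow_le fun x hx => ?_
    suffices supBelow m b ≤ supBelow m c - m x by linarith
    refine supBelow_le fun y hy => ?_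
    obtain ⟨z, hz, hzc⟩ := exists_padd_pLe_of_pLe hx hy hc
    linarith [hsm x y z hz, le_supBelow hm hzc]

lemma isMeasure_supBelow (hrdp : RDP E) (hm : IsJordan m) : IsMeasure (supBelow m) :=
  ⟨isSignedMeasure_supBelow hrdp hm, supBelow_nonneg hm⟩

lemma IsSupIn.eq_supBelow (hrdp : RDP E) (hm : IsJordan m) {mp : E → ℝ}
    (hp : IsSupIn {m, 0} mp) : mp = supBelow m := by
  obtain ⟨hpJ, hub, hleast⟩ := hp
  have hS := isMeasure_supBelow hrdp hm
  have hmp : IsMeasure mp := sub_zero mp ▸ hub 0 (Set.mem_insert_of_mem _ rfl)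
  have hm_mp := (hub m (Set.mem_insert _ _)).le
  have hmp_S := (hleast _ hS.isJordan <| by
    rintro t (rfl | rfl)
    · exact mLe_of_le hm.isSignedMeasure hS.1 (self_le_supBelow hm)
    · exact mLe_of_le isMeasure_zero.1 hS.1 (supBelow_nonneg hm)).le
  funext a
  exact le_antisymm (hmp_S a) (supBelow_le fun x hx => (hm_mp x).trans (hmp.mono hx))

lemma sigmaAdditive_supBelow (hσRDP : SigmaRDP E) (hm : IsJordan m) (hσ : SigmaAdditive m) :
    SigmaAdditive (supBelow m) := by
  intro a b ha hb
  refine tendsto_atTop_isLUB (monotone_nat_of_le_succ fun n => supBelow_mono hm (ha n))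
    ⟨?_, fun r hr => supBelow_le fun x hx => ?_⟩
  · rintro _ ⟨n, rfl⟩
    exact supBelow_mono hm (hb.1 _ ⟨n, rfl⟩)
  · obtain ⟨p, hp, hpx, hpa⟩ := hσRDP.exists_chain_le ha hb hx
    refine le_of_tendsto' (hσ p x hp hpx) fun n => ?_
    calc m (p n) ≤ supBelow m (a n) := le_supBelow hm (hpa n)
      _ ≤ r := hr ⟨n, rfl⟩

end supBelow

lemma SigmaAdditive.add {f g : E → ℝ} (hf : SigmaAdditive f) (hg : SigmaAdditive g) :
    SigmaAdditive (f + g) :=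
  fun a b ha hb => (hf a b ha hb).add (hg a b ha hb)

lemma SigmaAdditive.sub {f g : E → ℝ} (hf : SigmaAdditive f) (hg : SigmaAdditive g) :
    SigmaAdditive (f - g) :=
  fun a b ha hb => (hf a b ha hb).sub (hg a b ha hb)

/-- Proposition 4.7: on a pseudo effect algebra with σ-(RDP), if
`m` is a σ-additive Jordan signed measure, then `m⁺`, `m⁻` and `|m|` are σ-additive. -/
theorem stmt13 (hσRDP : SigmaRDP E) (m : E → ℝ) (hm : IsJordan m)
    (hσ : SigmaAdditive m)
    (mp mi : E → ℝ)
    (hp : IsSupIn {m, 0} mp)    -- `mp = m⁺ = m ⋁ 0`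
    (hi : IsInfIn {m, 0} mi) :  -- `-mi = m⁻ = -(m ⋀ 0)`
    SigmaAdditive mp ∧ SigmaAdditive (fun x => -(mi x)) ∧
      SigmaAdditive (fun x => mp x + -(mi x)) := by
  have hσp : SigmaAdditive mp :=
    hp.eq_supBelow hσRDP.rdp hm ▸ sigmaAdditive_supBelow hσRDP hm hσ
  have hneg : (fun x => -(mi x)) = mp - m := by
    funext x
    simp [eq_sub_of_isSupIn_of_isInfIn hm hp hi]
  have hσn : SigmaAdditive (fun x => -(mi x)) := hneg ▸ hσp.sub hσ
  exact ⟨hσp, hσn, hσp.add hσn⟩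

end PseudoEffectAlgebra
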